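/- Let d ≥ 2, let a ∈ ℕ^d with a_1 ≤ ⋯ ≤ a_d and 1/a_1 + ⋯ + 1/a_d = 1, set t = a_d, and suppose t is odd. Then the all-ones vector 1_{d+1} = (1, …, 1) ∈ ℝ^{d+1} lies in the relative interior of the d-dimensional simplex G = conv{a_1 e_1, …, a_{d−1} e_{d−1}, ((3t−1)/2) e_d + e_{d+1}, 3t e_{d+1}} ⊆ ℝ^{d+1}; in fact, 1_{d+1} = Σ_{i=1}^{d−1} (1/a_i)(a_i e_i) + λ(((3t−1)/2) e_d + e_{d+1}) + μ(3t e_{d+1}) with λ = 2/(3t−1) > 0, μ = (t−1)/(t(3t−1)) > 0, and Σ_{i=1}^{d−1} 1/a_i + λ + μ = 1. -/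

import Mathlib

/-!
The vertices of `G` are linearly independent: their coordinate matrix is upper triangular with
diagonal `a₁, …, a_{d-1}, (3t-1)/2, 3t`. Hence `G` is a `d`-simplex, and a point whose
barycentric coordinates are all positive lies in its relative interior, because positivity of
the (continuous) barycentric coordinates is an open condition inside the affine span. The
coordinates of `1_{d+1}` are `1/a_i`, `λ`, `μ`; they sum to `1` since `λ + μ = 1/t = 1/a_d`, and
`μ > 0` since `t ≥ 2`, as `d ≥ 2` unit fractions equal to `1` cannot sum to `1`.
-/

open scoped BigOperators

noncomputable section

/-- A point of `ℝ^d` is integral if all its coordinates are integers. -/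
def IsIntegralPoint {d : ℕ} (x : Fin d → ℝ) : Prop := ∀ i, ∃ n : ℤ, x i = (n : ℝ)

/-- The set `ℤ^d` of integral points of `ℝ^d`. -/
def latticePts (d : ℕ) : Set (Fin d → ℝ) := {x | IsIntegralPoint x}

/-- A set `K ⊆ ℝ^d` is lattice-free if it is closed, convex, `d`-dimensional (nonempty
interior) and its interior contains no integral point. -/
def IsLatticeFree {d : ℕ} (K : Set (Fin d → ℝ)) : Prop :=
  IsClosed K ∧ Convex ℝ K ∧ (interior K).Nonempty ∧ interior K ∩ latticePts d = ∅

/-- A set is maximal lattice-free if it is lattice-free and not properly contained in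
another lattice-free set. -/
def IsMaxLatticeFree {d : ℕ} (K : Set (Fin d → ℝ)) : Prop :=
  IsLatticeFree K ∧ ∀ K' : Set (Fin d → ℝ), IsLatticeFree K' → K ⊆ K' → K = K'

/-- A polytope is the convex hull of a finite set of points. -/
def IsPolytope {d : ℕ} (P : Set (Fin d → ℝ)) : Prop :=
  ∃ V : Finset (Fin d → ℝ), P = convexHull ℝ (V : Set (Fin d → ℝ))

/-- A polyhedron is a finite intersection of closed halfspaces. -/
def IsPolyhedron {d : ℕ} (P : Set (Fin d → ℝ)) : Prop :=
  ∃ (n : ℕ) (c : Fin n → (Fin d → ℝ)) (b : Fin n → ℝ),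
    P = {x | ∀ j, ∑ i, c j i * x i ≤ b j}

/-- The integer hull of a set: the convex hull of its integral points. -/
def intHull {d : ℕ} (K : Set (Fin d → ℝ)) : Set (Fin d → ℝ) :=
  convexHull ℝ (K ∩ latticePts d)

/-- A polytope is integral if it is the convex hull of its integral points. -/
def IsIntegralPolytope {d : ℕ} (P : Set (Fin d → ℝ)) : Prop :=
  IsPolytope P ∧ P = intHull P

/-- A facet of a `d`-dimensional closed convex set in `ℝ^d` : a nonempty exposed face of
dimension `d - 1`. -/
def IsFacet {d : ℕ} (P F : Set (Fin d → ℝ)) : Prop :=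
  IsExposed ℝ P F ∧ F.Nonempty ∧ Module.finrank ℝ (vectorSpan ℝ F) + 1 = d

/-- A facet is blocked if its relative interior contains an integral point. -/
def IsBlocked {d : ℕ} (F : Set (Fin d → ℝ)) : Prop :=
  ∃ x ∈ intrinsicInterior ℝ F, IsIntegralPoint x

/-- A facet `F` of a `d`-dimensional lattice-free polyhedron in `ℝ^d` is strongly blocked
if its integer hull is `(d-1)`-dimensional and the relative interior of the integer hull
contains an integral point. -/
def IsStronglyBlockedFacet {d : ℕ} (P F : Set (Fin d → ℝ)) : Prop :=
  IsFacet P F ∧ Module.finrank ℝ (vectorSpan ℝ (intHull F)) + 1 = d ∧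
    ∃ x ∈ intrinsicInterior ℝ (intHull F), IsIntegralPoint x

/-- A polyhedron is strongly blocked if all its facets are strongly blocked. -/
def IsStronglyBlocked {d : ℕ} (P : Set (Fin d → ℝ)) : Prop :=
  ∀ F, IsFacet P F → IsStronglyBlockedFacet P F

/-- Membership in the family `L^d` of weakly maximal integral lattice-free polytopes:
integral lattice-free polytopes not properly contained in another integral
lattice-free polytope. -/
def MemL {d : ℕ} (P : Set (Fin d → ℝ)) : Prop :=
  IsIntegralPolytope P ∧ IsLatticeFree P ∧
    ∀ Q : Set (Fin d → ℝ), IsIntegralPolytope Q → IsLatticeFree Q → P ⊆ Q → P = Q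

/-- Membership in the family `M^d` of strongly maximal integral lattice-free polytopes:
integral lattice-free polytopes not properly contained in another lattice-free set. -/
def MemM {d : ℕ} (P : Set (Fin d → ℝ)) : Prop :=
  IsIntegralPolytope P ∧ IsLatticeFree P ∧
    ∀ K : Set (Fin d → ℝ), IsLatticeFree K → P ⊆ K → P = K

/-- An affine transformation of `ℝ^d` is unimodular if it maps `ℤ^d` onto `ℤ^d`. -/
def IsUnimodular {d : ℕ} (A : (Fin d → ℝ) ≃ᵃ[ℝ] (Fin d → ℝ)) : Prop :=
  A '' latticePts d = latticePts d

/-- The relation on subsets of `ℝ^d` of coinciding up to an affine unimodular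
transformation. -/
def UnimodEquiv {d : ℕ} (P Q : Set (Fin d → ℝ)) : Prop :=
  ∃ A : (Fin d → ℝ) ≃ᵃ[ℝ] (Fin d → ℝ), IsUnimodular A ∧ Q = A '' P

/-- `κ(a) = 1/a₁ + ⋯ + 1/a_d`. -/
def kappa {d : ℕ} (a : Fin d → ℝ) : ℝ := ∑ i, (a i)⁻¹

/-- The axis-aligned simplex `T(a) = conv {0, a₁ e₁, …, a_d e_d}`. -/
def axisSimplex {d : ℕ} (a : Fin d → ℝ) : Set (Fin d → ℝ) :=
  convexHull ℝ (insert 0 (Set.range fun i => a i • (Pi.single i 1 : Fin d → ℝ)))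

/-- The map `φ` replacing the last component `t` by `t+1, t(t+1)`. -/
def phiMap {d : ℕ} (a : Fin (d + 1) → ℝ) : Fin (d + 2) → ℝ :=
  Fin.snoc (Fin.snoc (Fin.init a) (a (Fin.last d) + 1))
    (a (Fin.last d) * (a (Fin.last d) + 1))

/-- The map `ψ` replacing the last component `t` by
`t+3, t(t+1), (t+1)(t+3), (t+1)(t+3)`. -/
def psiMap {d : ℕ} (a : Fin (d + 1) → ℝ) : Fin (d + 4) → ℝ :=
  Fin.snoc (Fin.snoc (Fin.snoc (Fin.snoc (Fin.init a) (a (Fin.last d) + 3))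
    (a (Fin.last d) * (a (Fin.last d) + 1)))
    ((a (Fin.last d) + 1) * (a (Fin.last d) + 3)))
    ((a (Fin.last d) + 1) * (a (Fin.last d) + 3))

/-- The map `ξ` replacing the last component `t` by `(3/2)t, 3t`. -/
def xiMap {d : ℕ} (a : Fin (d + 1) → ℝ) : Fin (d + 2) → ℝ :=
  Fin.snoc (Fin.snoc (Fin.init a) (3 / 2 * a (Fin.last d))) (3 * a (Fin.last d))

/-- The composition `η = ξ ∘ ψ ∘ φ`. -/
def etaMap {d : ℕ} (a : Fin (d + 1) → ℝ) : Fin (d + 6) → ℝ :=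
  xiMap (psiMap (phiMap a))

/-- The set `A_d` of representations of `1` as a sum of `d` Egyptian fractions,
with components sorted in ascending order. -/
def EgyptSet (d : ℕ) : Set (Fin d → ℕ) :=
  {a | (∀ i, 0 < a i) ∧ Monotone a ∧ ∑ i, ((a i : ℝ))⁻¹ = 1}

end

open Set

theorem AffineIndependent.affineCombination_mem_intrinsicInterior_convexHull
    {ι E : Type*} [Fintype ι] [NormedAddCommGroup E] [NormedSpace ℝ E] {v : ι → E}
    (hv : AffineIndependent ℝ v) {w : ι → ℝ} (hw : ∀ i, 0 < w i) (hw1 : ∑ i, w i = 1) :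
    Finset.univ.affineCombination ℝ v w ∈ intrinsicInterior ℝ (convexHull ℝ (range v)) := by
  have : Nonempty ι := by
    by_contra h
    simp [not_nonempty_iff.mp h] at hw1
  set A := affineSpan ℝ (range v)
  have : Nonempty A := ⟨⟨_, affineCombination_mem_affineSpan hw1 v⟩⟩
  let v' : ι → A := fun i => ⟨v i, subset_affineSpan ℝ _ (mem_range_self i)⟩
  have hv' : A.subtype ∘ v' = v := rfl
  let b : AffineBasis ι ℝ A := ⟨v', AffineIndependent.of_comp A.subtype (hv' ▸ hv), by
    convert affineSpan_coe_preimage_eq_top (k := ℝ) (range v) using 2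
    ext ⟨x, hx⟩
    simp [v']⟩
  have hcomb (u : ι → ℝ) (hu : ∑ i, u i = 1) :
      (Finset.univ.affineCombination ℝ b u : E) = Finset.univ.affineCombination ℝ v u :=
    Finset.univ.map_affineCombination b u hu A.subtype
  rw [intrinsicInterior, affineSpan_convexHull]
  refine ⟨Finset.univ.affineCombination ℝ b w, ?_, hcomb w hw1⟩
  have hopen : IsOpen {y : A | ∀ i, 0 < b.coord i y} := by
    simp only [ofPred_forall]
    exact isOpen_iInter_of_finite fun i =>
      isOpen_lt continuous_const (b.coord i).continuous_of_finiteDimensional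
  refine interior_maximal (fun y hy => ?_) hopen fun i => ?_
  · rw [mem_preimage, ← b.affineCombination_coord_eq_self y,
      hcomb _ (b.sum_coord_apply_eq_one y)]
    exact affineCombination_mem_convexHull (fun i _ => (hy i).le) (b.sum_coord_apply_eq_one y)
  · rw [b.coord_apply_combination_of_mem (Finset.mem_univ i) hw1]
    exact hw i

theorem AffineIndependent.finrank_vectorSpan_convexHull {ι 𝕜 E : Type*} [Fintype ι] [Field 𝕜]
    [LinearOrder 𝕜] [IsStrictOrderedRing 𝕜] [AddCommGroup E] [Module 𝕜 E] {v : ι → E}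
    (hv : AffineIndependent 𝕜 v) {n : ℕ} (hn : Fintype.card ι = n + 1) :
    Module.finrank 𝕜 (vectorSpan 𝕜 (convexHull 𝕜 (range v))) = n := by
  rw [← direction_affineSpan, affineSpan_convexHull, direction_affineSpan, hv.finrank_vectorSpan hn]

theorem Matrix.linearIndependent_rows_of_isUpperTriangular {ι K : Type*} [Fintype ι]
    [LinearOrder ι] [Field K] {M : Matrix ι ι K} (hM : M.IsUpperTriangular)
    (hdiag : ∀ i, M i i ≠ 0) : LinearIndependent K fun i => M i := by
  refine Matrix.linearIndependent_rows_of_det_ne_zero ?_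
  rw [Matrix.det_of_isUpperTriangular hM]
  exact Finset.prod_ne_zero_iff.2 fun i _ => hdiag i

section SimplexG

variable {m : ℕ}

/-- The vertices of `G` are `simplexGVertices (a ∘ Fin.castSucc) ((3t - 1)/2) (3t)`. -/
noncomputable def simplexGVertices (α : Fin (m + 1) → ℝ) (c s : ℝ) :
    Fin (m + 3) → Fin (m + 3) → ℝ :=
  Fin.snoc (Fin.snoc (fun i => α i • Pi.single i.castSucc.castSucc 1)
    (c • Pi.single (Fin.last (m + 1)).castSucc 1 + Pi.single (Fin.last (m + 2)) 1))
    (s • Pi.single (Fin.last (m + 2)) 1)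

theorem range_simplexGVertices (α : Fin (m + 1) → ℝ) (c s : ℝ) :
    range (simplexGVertices α c s) =
      range (fun i => α i • (Pi.single i.castSucc.castSucc 1 : Fin (m + 3) → ℝ)) ∪
        {c • Pi.single (Fin.last (m + 1)).castSucc 1 + Pi.single (Fin.last (m + 2)) 1,
          s • Pi.single (Fin.last (m + 2)) 1} := by
  rw [simplexGVertices, Fin.range_snoc, Fin.range_snoc, union_insert, union_singleton,
    insert_comm]

theorem linearIndependent_simplexGVertices {α : Fin (m + 1) → ℝ} {c s : ℝ} (hα : ∀ i, α i ≠ 0)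
    (hc : c ≠ 0) (hs : s ≠ 0) : LinearIndependent ℝ (simplexGVertices α c s) := by
  refine Matrix.linearIndependent_rows_of_isUpperTriangular (fun j k (hkj : k < j) => ?_)
    fun j => ?_
  · induction j using Fin.lastCases with
    | last => simp [simplexGVertices, hkj.ne]
    | cast j =>
      induction j using Fin.lastCases with
      | last =>
        have := Fin.lt_last_iff_ne_last.1 (hkj.trans (Fin.castSucc_lt_last _))
        simp [simplexGVertices, hkj.ne, this]
      | cast i => simp [simplexGVertices, hkj.ne]
  · induction j using Fin.lastCases with
    | last => simp [simplexGVertices, hs]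
    | cast j =>
      induction j using Fin.lastCases with
      | last => simp [simplexGVertices, hc, (Fin.castSucc_lt_last _).ne]
      | cast i => simp [simplexGVertices, hα]

theorem const_one_eq_combination_simplexGVertices {α : Fin (m + 1) → ℝ} {c s lam mu : ℝ}
    (hα : ∀ i, α i ≠ 0) (hlam : lam * c = 1) (hmu : lam + mu * s = 1) :
    (fun _ => (1 : ℝ)) =
      (∑ i, (α i)⁻¹ • (α i • (Pi.single i.castSucc.castSucc 1 : Fin (m + 3) → ℝ))) +
        lam • (c • Pi.single (Fin.last (m + 1)).castSucc 1 + Pi.single (Fin.last (m + 2)) 1) +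
        mu • (s • Pi.single (Fin.last (m + 2)) 1) := by
  have hsum : ∑ i, (α i)⁻¹ • (α i • (Pi.single i.castSucc.castSucc 1 : Fin (m + 3) → ℝ)) =
      ∑ i : Fin (m + 1), Pi.single i.castSucc.castSucc 1 := by
    simp only [smul_smul, inv_mul_cancel₀ (hα _), one_smul]
  funext k
  rw [hsum]
  induction k using Fin.lastCases with
  | last => simp [Finset.sum_apply, hmu]
  | cast k =>
    induction k using Fin.lastCases with
    | last => simp [Finset.sum_apply, hlam]
    | cast i => simp [Pi.single_apply, Finset.sum_apply]

theorem affineCombination_simplexGVertices {α β : Fin (m + 1) → ℝ} {c s lam mu : ℝ}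
    (hw : ∑ i, β i + lam + mu = 1) :
    Finset.univ.affineCombination ℝ (simplexGVertices α c s) (Fin.snoc (Fin.snoc β lam) mu) =
      (∑ i, β i • (α i • (Pi.single i.castSucc.castSucc 1 : Fin (m + 3) → ℝ))) +
        lam • (c • Pi.single (Fin.last (m + 1)).castSucc 1 + Pi.single (Fin.last (m + 2)) 1) +
        mu • (s • Pi.single (Fin.last (m + 2)) 1) := by
  rw [Finset.affineCombination_eq_linear_combination _ _ _
    (by simpa [Fin.sum_univ_castSucc] using hw)]
  simp [Fin.sum_univ_castSucc, simplexGVertices]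

theorem finrank_vectorSpan_convexHull_simplexGVertices {α : Fin (m + 1) → ℝ} {c s : ℝ}
    (hα : ∀ i, α i ≠ 0) (hc : c ≠ 0) (hs : s ≠ 0) :
    Module.finrank ℝ (vectorSpan ℝ (convexHull ℝ (range (simplexGVertices α c s)))) = m + 2 :=
  (linearIndependent_simplexGVertices hα hc hs).affineIndependent.finrank_vectorSpan_convexHull
    (Fintype.card_fin _)

theorem combination_simplexGVertices_mem_intrinsicInterior {α β : Fin (m + 1) → ℝ}
    {c s lam mu : ℝ} (hα : ∀ i, α i ≠ 0) (hc : c ≠ 0) (hs : s ≠ 0) (hβ : ∀ i, 0 < β i)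
    (hlam : 0 < lam) (hmu : 0 < mu) (hw : ∑ i, β i + lam + mu = 1) :
    (∑ i, β i • (α i • (Pi.single i.castSucc.castSucc 1 : Fin (m + 3) → ℝ))) +
        lam • (c • Pi.single (Fin.last (m + 1)).castSucc 1 + Pi.single (Fin.last (m + 2)) 1) +
        mu • (s • Pi.single (Fin.last (m + 2)) 1) ∈
      intrinsicInterior ℝ (convexHull ℝ (range (simplexGVertices α c s))) := by
  rw [← affineCombination_simplexGVertices hw]
  refine (linearIndependent_simplexGVertices hα hc hs).affineIndependent
    |>.affineCombination_mem_intrinsicInterior_convexHull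
      (Fin.forall_fin_succ'.2 ⟨Fin.forall_fin_succ'.2 ⟨by simpa using hβ, by simpa⟩, by simpa⟩) ?_
  simpa [Fin.sum_univ_castSucc] using hw

end SimplexG

theorem two_le_last_of_mem_egyptSet {m : ℕ} {a : Fin (m + 2) → ℕ} (ha : a ∈ EgyptSet (m + 2)) :
    2 ≤ a (Fin.last (m + 1)) := by
  obtain ⟨hpos, hmono, hsum⟩ := ha
  by_contra! hlt
  have hone : ∀ i, a i = 1 := fun i => by
    have := hmono (Fin.le_last i)
    have := hpos i
    omega
  simp [hone] at hsum
  linarith [m.cast_nonneg (α := ℝ)]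

/-- for `d ≥ 2` (here `d = m + 2`), `a ∈ A_d` with `t = a_d` odd, the
all-ones vector of `ℝ^{d+1}` lies in the relative interior of the `d`-dimensional simplex
`G = conv {a₁e₁, …, a_{d-1}e_{d-1}, ((3t-1)/2) e_d + e_{d+1}, 3t e_{d+1}}`, being the
explicit convex combination of its vertices with positive coefficients
`1/a₁, …, 1/a_{d-1}, λ = 2/(3t-1), μ = (t-1)/(t(3t-1))` summing to `1`. -/
theorem statement16 {m : ℕ} (a : Fin (m + 2) → ℕ) (ha : a ∈ EgyptSet (m + 2))
    (t : ℝ) (ht : t = (a (Fin.last (m + 1)) : ℝ))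
    (lam mu : ℝ) (hlam : lam = 2 / (3 * t - 1)) (hmu : mu = (t - 1) / (t * (3 * t - 1)))
    (G : Set (Fin (m + 3) → ℝ))
    (hG : G = convexHull ℝ
      ((Set.range fun i : Fin (m + 1) =>
          ((a i.castSucc : ℝ)) • (Pi.single i.castSucc.castSucc 1 : Fin (m + 3) → ℝ)) ∪
        {((3 * t - 1) / 2) • (Pi.single (⟨m + 1, by omega⟩ : Fin (m + 3)) 1 : Fin (m + 3) → ℝ) +
            (Pi.single (Fin.last (m + 2)) 1 : Fin (m + 3) → ℝ),
          (3 * t) • (Pi.single (Fin.last (m + 2)) 1 : Fin (m + 3) → ℝ)})) :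
    Module.finrank ℝ (vectorSpan ℝ G) = m + 2 ∧
    (fun _ => (1 : ℝ)) ∈ intrinsicInterior ℝ G ∧
    0 < lam ∧ 0 < mu ∧
    (fun _ => (1 : ℝ)) =
      (∑ i : Fin (m + 1), ((a i.castSucc : ℝ))⁻¹ •
          (((a i.castSucc : ℝ)) • (Pi.single i.castSucc.castSucc 1 : Fin (m + 3) → ℝ))) +
        lam • (((3 * t - 1) / 2) •
            (Pi.single (⟨m + 1, by omega⟩ : Fin (m + 3)) 1 : Fin (m + 3) → ℝ) +
          (Pi.single (Fin.last (m + 2)) 1 : Fin (m + 3) → ℝ)) +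
        mu • ((3 * t) • (Pi.single (Fin.last (m + 2)) 1 : Fin (m + 3) → ℝ)) ∧
    (∑ i : Fin (m + 1), ((a i.castSucc : ℝ))⁻¹) + lam + mu = 1 := by
  have ht2 : (2 : ℝ) ≤ t := ht ▸ by exact_mod_cast two_le_last_of_mem_egyptSet ha
  obtain ⟨hpos, -, hsum⟩ := ha
  let α : Fin (m + 1) → ℝ := fun i => a i.castSucc
  have hα : ∀ i, 0 < α i := fun i => by simp [α, hpos]
  have hα' : ∀ i, α i ≠ 0 := fun i => (hα i).ne'
  have ht0 : t ≠ 0 := by positivity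
  have h3t : 0 < 3 * t - 1 := by linarith
  have hlam0 : 0 < lam := hlam ▸ div_pos two_pos h3t
  have hmu0 : 0 < mu := hmu ▸ div_pos (by linarith) (by positivity)
  have hsum' : ∑ i, (α i)⁻¹ + lam + mu = 1 := by
    have hlm : lam + mu = t⁻¹ := by rw [hlam, hmu]; field_simp; ring
    rw [add_assoc, hlm, ht, ← hsum, Fin.sum_univ_castSucc (f := fun i => ((a i : ℝ))⁻¹)]
  have hcomb := const_one_eq_combination_simplexGVertices (c := (3 * t - 1) / 2) (s := 3 * t)
    (lam := lam) (mu := mu) hα' (by rw [hlam]; field_simp)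
    (by rw [hlam, hmu]; field_simp; ring)
  have hG' : G = convexHull ℝ (range (simplexGVertices α ((3 * t - 1) / 2) (3 * t))) := by
    rw [range_simplexGVertices]; exact hG
  refine ⟨?_, ?_, hlam0, hmu0, hcomb, hsum'⟩
  · rw [hG']
    exact finrank_vectorSpan_convexHull_simplexGVertices hα' (by positivity) (by positivity)
  · rw [hG', hcomb]
    exact combination_simplexGVertices_mem_intrinsicInterior hα' (by positivity) (by positivity)
      (fun i => inv_pos.2 (hα i)) hlam0 hmu0 hsum'
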